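/- Let A be an N×N primitive nonnegative matrix with Perron–Frobenius eigenvalue λ. Set f(i) = Σⱼ A(i,j) and M(i,j) = A(i,j)/f(i). Let (X_n)_{n≥0} be a Markov chain with transition matrix M started at a fixed state k, and let τ_k = inf{n ≥ 1 : X_n = k}. Then E_k[ λ^{−τ_k} Π_{t=0}^{τ_k−1} f(X_t) ] = 1. -/

import Mathlib

open MeasureTheory Finset Filter Matrix Topology

/-!
Write `T = lam⁻¹ • A` and let `B` be `T` with the row of `k` replaced by zero. Since
`A i j = f i * M i j`, the weight `lam⁻¹ ^ τ * ∏_{t<τ} f (X t)` times the probability of a path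
that first returns to `k` at time `n + 1` is the `T`-weight of that path, so the event
`τ = n + 1` contributes `(T * B ^ n) k k` and the expectation is `∑ n, (T * B ^ n) k k`.

The left eigenvector makes this series telescope: `u ᵥ* T = u` gives `u ᵥ* B = u - u k • T k`,
hence `(u ᵥ* B ^ N) k = u k * (1 - ∑_{n<N} (T * B ^ n) k k)`. Finally `u ᵥ* B ^ N → 0`: by
primitivity the paths of length `m` leaving `k` carry a fixed fraction of the mass of
`u = u ᵥ* T ^ m` at every state, and `B` forbids them, so `u ᵥ* B ^ m ≤ (1 - ε) • u`.
-/

section MatrixPowers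

variable {α R : Type*} [Fintype α] [DecidableEq α]

theorem sum_path_prod_eq_vecMul_pow_dotProduct [CommSemiring R] (T : Matrix α α R) (n : ℕ)
    (ψ φ : α → R) :
    ∑ v : Fin (n + 1) → α,
        ψ (v 0) * (∏ t : Fin n, T (v t.castSucc) (v t.succ)) * φ (v (Fin.last n)) =
      ψ ᵥ* (T ^ n) ⬝ᵥ φ := by
  induction n generalizing ψ with
  | zero =>
    rw [← (Equiv.funUnique (Fin 1) α).symm.sum_comp]
    simp [dotProduct]
  | succ n ih =>
    rw [← (Fin.consEquiv fun _ => α).sum_comp, Fintype.sum_prod_type, Finset.sum_comm,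
      pow_succ', ← vecMul_vecMul, ← ih]
    refine Fintype.sum_congr _ _ fun w => ?_
    simp only [Fin.consEquiv_apply, Fin.prod_univ_succ, Fin.castSucc_zero, Fin.cons_zero,
      ← Fin.succ_castSucc, Fin.cons_last, Fin.cons_succ, vecMul, dotProduct, Finset.sum_mul]
    exact Fintype.sum_congr _ _ fun x => by ring

theorem vecMul_pow_eq_self [Semiring R] {T : Matrix α α R} {u : α → R} (hu : u ᵥ* T = u) (n : ℕ) :
    u ᵥ* T ^ n = u := by
  induction n with
  | zero => simp
  | succ n ih => rw [pow_succ, ← vecMul_vecMul, ih, hu]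

end MatrixPowers

theorem vecMul_le_vecMul_of_nonneg {α R : Type*} [Fintype α] [Semiring R] [PartialOrder R]
    [IsOrderedRing R] {B : Matrix α α R} (hB : ∀ i j, 0 ≤ B i j) {w w' : α → R} (h : w ≤ w') :
    w ᵥ* B ≤ w' ᵥ* B :=
  fun j => sum_le_sum fun i _ => mul_le_mul_of_nonneg_right (h i) (hB i j)

theorem vecMul_nonneg {α R : Type*} [Fintype α] [Semiring R] [PartialOrder R] [IsOrderedRing R]
    {B : Matrix α α R} (hB : ∀ i j, 0 ≤ B i j) {w : α → R} (hw : 0 ≤ w) : 0 ≤ w ᵥ* B := by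
  simpa using vecMul_le_vecMul_of_nonneg hB hw

theorem sum_apply_pos_of_pow_apply_pos {α R : Type*} [Fintype α] [DecidableEq α] [Semiring R]
    [LinearOrder R] [IsOrderedRing R] {A : Matrix α α R} (hA : ∀ i j, 0 ≤ A i j) {m : ℕ}
    (hm : 0 < m) {i j : α} (h : 0 < (A ^ m) i j) : 0 < ∑ l, A i l := by
  by_contra hsum
  have hrow : ∀ l, A i l = 0 := fun l =>
    le_antisymm ((single_le_sum (fun l _ => hA i l) (mem_univ l)).trans (not_lt.1 hsum)) (hA i l)
  obtain ⟨n, rfl⟩ := Nat.exists_eq_add_one_of_ne_zero hm.ne'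
  simp [pow_succ', mul_apply, hrow] at h

section Taboo

variable {α R : Type*} [DecidableEq α]

/-- `(tabooMatrix T k ^ n) i j` is the total `T`-weight of the paths of length `n` from `i` to `j`
that are not at `k` at any of the times `0, …, n - 1`. -/
def tabooMatrix [Zero R] (T : Matrix α α R) (k : α) : Matrix α α R :=
  of fun i j => if i = k then 0 else T i j

theorem tabooMatrix_apply [Zero R] (T : Matrix α α R) (k i j : α) :
    tabooMatrix T k i j = if i = k then 0 else T i j :=
  rfl

theorem tabooMatrix_nonneg [Zero R] [Preorder R] {T : Matrix α α R} (hT : ∀ i j, 0 ≤ T i j)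
    (k i j : α) : 0 ≤ tabooMatrix T k i j := by
  rw [tabooMatrix_apply]
  split_ifs
  exacts [le_rfl, hT i j]

/-- `v` visits `k` at its last time `n + 1` and at none of the times `1, …, n`
(written `t.castSucc.succ` for `t : Fin n`). -/
def IsFirstReturnPath (k : α) {n : ℕ} (v : Fin (n + 2) → α) : Prop :=
  v (Fin.last (n + 1)) = k ∧ ∀ t : Fin n, v t.castSucc.succ ≠ k

instance (k : α) (n : ℕ) : DecidablePred (IsFirstReturnPath k (n := n)) :=
  fun _ => inferInstanceAs (Decidable (_ ∧ _))

variable [Fintype α]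

theorem sum_isFirstReturnPath_prod [CommSemiring R] (T : Matrix α α R) (k : α) (n : ℕ) :
    ∑ v : Fin (n + 2) → α, (if v 0 = k ∧ IsFirstReturnPath k v then
        ∏ t : Fin (n + 1), T (v t.castSucc) (v t.succ) else 0) =
      (T * tabooMatrix T k ^ n) k k := by
  rw [← (Fin.consEquiv fun _ => α).sum_comp, Fintype.sum_prod_type,
    Fintype.sum_eq_single k fun x hx => by simp [hx]]
  have hpaths := sum_path_prod_eq_vecMul_pow_dotProduct (tabooMatrix T k) n (T k) (Pi.single k 1)
  rw [dotProduct_single, mul_one] at hpaths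
  refine Eq.trans (Fintype.sum_congr _ _ fun w => ?_) hpaths
  simp only [Fin.consEquiv_apply, IsFirstReturnPath, Fin.cons_zero, Fin.cons_last,
    ← Fin.succ_castSucc, Fin.cons_succ, Fin.prod_univ_succ, Fin.castSucc_zero, true_and,
    Pi.single_apply]
  by_cases hlast : w (Fin.last n) = k
  · by_cases hmid : ∃ t : Fin n, w t.castSucc = k
    · obtain ⟨t, ht⟩ := hmid
      rw [if_neg fun h => h.2 t ht, prod_eq_zero (mem_univ t) (by simp [tabooMatrix_apply, ht])]
      simp
    · simp [hlast, not_exists.mp hmid, tabooMatrix_apply]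
  · simp [hlast]

theorem tabooMatrix_pow_succ_apply_self [Semiring R] (T : Matrix α α R) (k : α) (n : ℕ)
    (j : α) : (tabooMatrix T k ^ (n + 1)) k j = 0 := by
  simp [pow_succ', mul_apply, tabooMatrix]

theorem vecMul_tabooMatrix [Ring R] (T : Matrix α α R) (k : α) (u : α → R) :
    u ᵥ* tabooMatrix T k = u ᵥ* T - u k • T k := by
  ext j
  simp [vecMul, dotProduct, tabooMatrix, mul_ite, sum_ite, filter_ne']

theorem vecMul_tabooMatrix_pow_apply_self [CommRing R] (T : Matrix α α R) (k : α) {u : α → R}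
    (hu : u ᵥ* T = u) (N : ℕ) :
    (u ᵥ* tabooMatrix T k ^ N) k = u k - u k * ∑ n ∈ range N, (T * tabooMatrix T k ^ n) k k := by
  induction N with
  | zero => simp
  | succ N ih =>
    rw [pow_succ', ← vecMul_vecMul, vecMul_tabooMatrix, hu, sub_vecMul, smul_vecMul,
      Pi.sub_apply, ih, Pi.smul_apply, sum_range_succ, smul_eq_mul, sub_sub, ← mul_add]
    rfl

end Taboo

section Decay

variable {α : Type*} [Fintype α] [DecidableEq α] {T : Matrix α α ℝ} {k : α} {u : α → ℝ}

theorem tabooMatrix_pow_apply_le (hT : ∀ i j, 0 ≤ T i j) (n : ℕ) (i j : α) :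
    (tabooMatrix T k ^ n) i j ≤ (T ^ n) i j := by
  induction n generalizing j with
  | zero => rfl
  | succ n ih =>
    simp only [pow_succ, mul_apply]
    refine sum_le_sum fun l _ => mul_le_mul (ih l) ?_ (tabooMatrix_nonneg hT k l j)
      (pow_apply_nonneg hT n i l)
    rw [tabooMatrix_apply]
    split_ifs
    exacts [hT l j, le_rfl]

theorem vecMul_tabooMatrix_le (hT : ∀ i j, 0 ≤ T i j) (hu_pos : ∀ i, 0 < u i)
    (hu : u ᵥ* T = u) : u ᵥ* tabooMatrix T k ≤ u := by
  rw [vecMul_tabooMatrix, hu]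
  exact sub_le_self _ (smul_nonneg (hu_pos k).le (hT k))

theorem vecMul_tabooMatrix_pow_apply_le (hT : ∀ i j, 0 ≤ T i j) (hu_pos : ∀ i, 0 < u i)
    (hu : u ᵥ* T = u) {m : ℕ} (hm : 0 < m) (j : α) :
    (u ᵥ* tabooMatrix T k ^ m) j ≤ u j - u k * (T ^ m) k j := by
  obtain ⟨n, rfl⟩ := Nat.exists_eq_add_one_of_ne_zero hm.ne'
  have hle : ∀ i, (tabooMatrix T k ^ (n + 1)) i j ≤
      (T ^ (n + 1)) i j - if i = k then (T ^ (n + 1)) k j else 0 := by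
    intro i
    split_ifs with hi
    · rw [hi, tabooMatrix_pow_succ_apply_self, sub_self]
    · rw [sub_zero]
      exact tabooMatrix_pow_apply_le hT _ i j
  calc (u ᵥ* tabooMatrix T k ^ (n + 1)) j
      ≤ ∑ i, u i * ((T ^ (n + 1)) i j - if i = k then (T ^ (n + 1)) k j else 0) :=
        sum_le_sum fun i _ => mul_le_mul_of_nonneg_left (hle i) (hu_pos i).le
    _ = (u ᵥ* T ^ (n + 1)) j - u k * (T ^ (n + 1)) k j := by
        simp [mul_sub, sum_sub_distrib, vecMul, dotProduct]
    _ = u j - u k * (T ^ (n + 1)) k j := by rw [vecMul_pow_eq_self hu]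

theorem exists_vecMul_tabooMatrix_pow_le_smul (hT : ∀ i j, 0 ≤ T i j) (hu_pos : ∀ i, 0 < u i)
    (hu : u ᵥ* T = u) {m : ℕ} (hm : 0 < m) (hTm : ∀ j, 0 < (T ^ m) k j) :
    ∃ c : ℝ, 0 ≤ c ∧ c < 1 ∧ u ᵥ* tabooMatrix T k ^ m ≤ c • u := by
  have : Nonempty α := ⟨k⟩
  obtain ⟨j₀, hj₀⟩ := Finite.exists_min fun j => u k * (T ^ m) k j / u j
  set ε := u k * (T ^ m) k j₀ / u j₀
  have hε : 0 < ε := div_pos (mul_pos (hu_pos k) (hTm j₀)) (hu_pos j₀)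
  have hcontr : u ᵥ* tabooMatrix T k ^ m ≤ (1 - ε) • u := fun j => by
    have hεj : ε * u j ≤ u k * (T ^ m) k j := (le_div_iff₀ (hu_pos j)).mp (hj₀ j)
    have := vecMul_tabooMatrix_pow_apply_le (k := k) hT hu_pos hu hm j
    simp only [Pi.smul_apply, smul_eq_mul]
    linarith
  have hnonneg : 0 ≤ (u ᵥ* tabooMatrix T k ^ m) k :=
    vecMul_nonneg (pow_apply_nonneg (tabooMatrix_nonneg hT k) m) (fun i => (hu_pos i).le) k
  exact ⟨1 - ε, nonneg_of_mul_nonneg_left (hnonneg.trans (hcontr k)) (hu_pos k), by linarith,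
    hcontr⟩

theorem tendsto_vecMul_tabooMatrix_pow_apply (hT : ∀ i j, 0 ≤ T i j) (hu_pos : ∀ i, 0 < u i)
    (hu : u ᵥ* T = u) {m : ℕ} (hm : 0 < m) (hTm : ∀ j, 0 < (T ^ m) k j) :
    Tendsto (fun N => (u ᵥ* tabooMatrix T k ^ N) k) atTop (𝓝 0) := by
  set B := tabooMatrix T k
  have hB : ∀ n i j, 0 ≤ (B ^ n) i j := pow_apply_nonneg (tabooMatrix_nonneg hT k)
  obtain ⟨c, hc0, hc1, hcontr⟩ := exists_vecMul_tabooMatrix_pow_le_smul hT hu_pos hu hm hTm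
  have hgeom : ∀ j, u ᵥ* B ^ (m * j) ≤ c ^ j • u := by
    intro j
    induction j with
    | zero => simp
    | succ j ih =>
      calc u ᵥ* B ^ (m * (j + 1)) = (u ᵥ* B ^ (m * j)) ᵥ* B ^ m := by
            rw [mul_add, mul_one, pow_add, vecMul_vecMul]
        _ ≤ (c ^ j • u) ᵥ* B ^ m := vecMul_le_vecMul_of_nonneg (hB m) ih
        _ = c ^ j • (u ᵥ* B ^ m) := smul_vecMul _ _ _
        _ ≤ c ^ j • c • u := smul_le_smul_of_nonneg_left hcontr (pow_nonneg hc0 j)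
        _ = c ^ (j + 1) • u := by rw [smul_smul, pow_succ]
  have hanti : Antitone fun N => (u ᵥ* B ^ N) k := antitone_nat_of_succ_le fun N => by
    rw [pow_succ', ← vecMul_vecMul]
    exact vecMul_le_vecMul_of_nonneg (hB N) (vecMul_tabooMatrix_le hT hu_pos hu) k
  have hlim : Tendsto (fun N => c ^ (N / m) * u k) atTop (𝓝 0) := by
    simpa using ((tendsto_pow_atTop_nhds_zero_of_lt_one hc0 hc1).comp
      (Nat.tendsto_div_const_atTop hm.ne')).mul_const (u k)
  exact squeeze_zero (fun N => vecMul_nonneg (hB N) (fun i => (hu_pos i).le) k)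
    (fun N => (hanti (Nat.mul_div_le N m)).trans (hgeom (N / m) k)) hlim

theorem mul_tabooMatrix_pow_apply_nonneg (hT : ∀ i j, 0 ≤ T i j) (n : ℕ) (i j : α) :
    0 ≤ (T * tabooMatrix T k ^ n) i j :=
  sum_nonneg fun l _ => mul_nonneg (hT i l) (pow_apply_nonneg (tabooMatrix_nonneg hT k) n l j)

theorem hasSum_mul_tabooMatrix_pow_apply_self (hT : ∀ i j, 0 ≤ T i j) (hu_pos : ∀ i, 0 < u i)
    (hu : u ᵥ* T = u) {m : ℕ} (hm : 0 < m) (hTm : ∀ j, 0 < (T ^ m) k j) :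
    HasSum (fun n => (T * tabooMatrix T k ^ n) k k) 1 := by
  rw [hasSum_iff_tendsto_nat_of_nonneg fun n => mul_tabooMatrix_pow_apply_nonneg hT n k k]
  have hpartial : ∀ N, ∑ n ∈ range N, (T * tabooMatrix T k ^ n) k k =
      1 - (u ᵥ* tabooMatrix T k ^ N) k / u k := fun N => by
    rw [vecMul_tabooMatrix_pow_apply_self T k hu, sub_div, div_self (hu_pos k).ne',
      mul_div_cancel_left₀ _ (hu_pos k).ne', sub_sub_cancel]
  simp_rw [hpartial]
  simpa using tendsto_const_nhds.sub
    ((tendsto_vecMul_tabooMatrix_pow_apply hT hu_pos hu hm hTm).div_const (u k))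

theorem tsum_ofReal_mul_tabooMatrix_pow_apply_self (hT : ∀ i j, 0 ≤ T i j)
    (hu_pos : ∀ i, 0 < u i) (hu : u ᵥ* T = u) {m : ℕ} (hm : 0 < m) (hTm : ∀ j, 0 < (T ^ m) k j) :
    ∑' n, ENNReal.ofReal ((T * tabooMatrix T k ^ n) k k) = 1 := by
  have hsum := hasSum_mul_tabooMatrix_pow_apply_self hT hu_pos hu hm hTm
  rw [← ENNReal.ofReal_tsum_of_nonneg (fun n => mul_tabooMatrix_pow_apply_nonneg hT n k k)
    hsum.summable, hsum.tsum_eq, ENNReal.ofReal_one]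

end Decay

section MarkovChain

variable {Ω α : Type*} {mΩ : MeasurableSpace Ω} {P : Measure Ω}

theorem lintegral_ofReal_comp_eq_sum_measureReal {β : Type*} [Fintype β] [MeasurableSpace β]
    [MeasurableSingletonClass β] [IsFiniteMeasure P] {Y : Ω → β} (hY : Measurable Y) {G : β → ℝ}
    (hG : ∀ b, 0 ≤ G b) :
    ∫⁻ ω, ENNReal.ofReal (G (Y ω)) ∂P = ENNReal.ofReal (∑ b, G b * P.real (Y ⁻¹' {b})) := by
  rw [← lintegral_map (f := fun b => ENNReal.ofReal (G b)) (measurable_of_finite _) hY,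
    lintegral_fintype, ENNReal.ofReal_sum_of_nonneg fun b _ => mul_nonneg (hG b) measureReal_nonneg]
  refine Fintype.sum_congr _ _ fun b => ?_
  rw [Measure.map_apply hY (measurableSet_singleton b), ENNReal.ofReal_mul (hG b),
    ofReal_measureReal]

def trajectory (X : ℕ → Ω → α) (n : ℕ) (ω : Ω) : Fin (n + 1) → α := fun t => X t ω

noncomputable def returnTime (X : ℕ → Ω → α) (k : α) (ω : Ω) : ℕ := sInf {n | 1 ≤ n ∧ X n ω = k}

variable {X : ℕ → Ω → α} {k : α}

theorem returnTime_eq_succ_iff {n : ℕ} {ω : Ω} :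
    returnTime X k ω = n + 1 ↔ IsFirstReturnPath k (trajectory X (n + 1) ω) := by
  simp only [IsFirstReturnPath, trajectory, Fin.val_last, Fin.val_succ, Fin.val_castSucc]
  constructor
  · intro h
    have hpos : 0 < returnTime X k ω := h ▸ n.succ_pos
    have hmem := Nat.sInf_mem (Nat.nonempty_of_pos_sInf hpos)
    rw [← returnTime, h] at hmem
    refine ⟨hmem.2, fun t ht => Nat.notMem_of_lt_sInf (s := {n | 1 ≤ n ∧ X n ω = k}) ?_
      ⟨t.succ_pos, ht⟩⟩
    rw [← returnTime, h]
    omega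
  · rintro ⟨hlast, hmid⟩
    refine le_antisymm (Nat.sInf_le ⟨n.succ_pos, hlast⟩) (le_csInf ⟨n + 1, n.succ_pos, hlast⟩ ?_)
    rintro t ⟨ht, htk⟩
    by_contra! hlt
    obtain ⟨s, rfl⟩ := Nat.exists_eq_add_one_of_ne_zero (by omega : t ≠ 0)
    exact hmid ⟨s, by omega⟩ htk

theorem measureReal_trajectory_preimage [DecidableEq α] {M : Matrix α α ℝ}
    (h_chain : ∀ (n : ℕ) (path : ℕ → α), (P {ω | ∀ t ≤ n, X t ω = path t}).toReal =
      (if path 0 = k then 1 else 0) * ∏ t ∈ range n, M (path t) (path (t + 1)))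
    (n : ℕ) (v : Fin (n + 1) → α) :
    P.real (trajectory X n ⁻¹' {v}) =
      (if v 0 = k then 1 else 0) * ∏ t : Fin n, M (v t.castSucc) (v t.succ) := by
  have hval : ∀ t < n + 1, (Fin.ofNat (n + 1) t : ℕ) = t := fun t ht => Nat.mod_eq_of_lt ht
  have hset : trajectory X n ⁻¹' {v} = {ω | ∀ t ≤ n, X t ω = v (Fin.ofNat (n + 1) t)} := by
    ext ω
    simp only [Set.mem_preimage, Set.mem_singleton_iff, Set.mem_ofPred_eq, funext_iff, trajectory]
    constructor
    · intro h t ht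
      rw [← h, hval t (by omega)]
    · intro h t
      rw [h t (by omega)]
      exact congrArg v (Fin.ext (hval t t.isLt))
  rw [hset, measureReal_def, h_chain, ← Fin.prod_univ_eq_prod_range]
  congr 1
  refine Fintype.prod_congr _ _ fun t => ?_
  congr 2 <;> exact Fin.ext (hval _ (by omega))

variable [MeasurableSpace α]

theorem measurable_trajectory (hX : ∀ n, Measurable (X n)) (n : ℕ) :
    Measurable (trajectory X n) :=
  measurable_pi_lambda _ fun t => hX t

variable [Fintype α] [MeasurableSingletonClass α]

theorem measurableSet_returnTime_eq_succ (hX : ∀ n, Measurable (X n)) (n : ℕ) :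
    MeasurableSet {ω | returnTime X k ω = n + 1} :=
  (Set.ext fun _ => returnTime_eq_succ_iff) ▸
    measurable_trajectory hX (n + 1) (Set.toFinite {v | IsFirstReturnPath k v}).measurableSet

theorem measurable_returnTime (hX : ∀ n, Measurable (X n)) : Measurable (returnTime X k) := by
  refine measurable_to_countable' fun n => ?_
  cases n with
  | zero =>
    have hzero : returnTime X k ⁻¹' {0} = (⋃ n, {ω | returnTime X k ω = n + 1})ᶜ := by
      ext ω
      simp only [Set.mem_preimage, Set.mem_singleton_iff, Set.mem_compl_iff, Set.mem_iUnion,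
        Set.mem_ofPred_eq, not_exists]
      exact ⟨fun h n => by omega,
        fun h => by by_contra h0; exact h (returnTime X k ω - 1) (by omega)⟩
    rw [hzero]
    exact (MeasurableSet.iUnion fun n => measurableSet_returnTime_eq_succ hX n).compl
  | succ n => exact measurableSet_returnTime_eq_succ hX n

theorem measurable_prod_range_returnTime (hX : ∀ n, Measurable (X n)) (h : α → ℝ) :
    Measurable fun ω => ∏ t ∈ range (returnTime X k ω), h (X t ω) := by
  have hjoint : Measurable fun p : Ω × ℕ => ∏ t ∈ range p.2, h (X t p.1) :=
    measurable_from_prod_countable_left fun n =>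
      Finset.measurable_prod (range n) fun t _ => (measurable_of_finite h).comp (hX t)
  exact hjoint.comp (measurable_id.prodMk (measurable_returnTime hX))

variable [DecidableEq α] [IsFiniteMeasure P] {M : Matrix α α ℝ}

theorem setLIntegral_prod_returnTime_eq_succ (hX : ∀ n, Measurable (X n))
    (h_chain : ∀ (n : ℕ) (path : ℕ → α), (P {ω | ∀ t ≤ n, X t ω = path t}).toReal =
      (if path 0 = k then 1 else 0) * ∏ t ∈ range n, M (path t) (path (t + 1)))
    {h : α → ℝ} (hh : ∀ i, 0 ≤ h i) (n : ℕ) :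
    ∫⁻ ω in {ω | returnTime X k ω = n + 1},
        ENNReal.ofReal (∏ t ∈ range (returnTime X k ω), h (X t ω)) ∂P =
      ENNReal.ofReal ((diagonal h * M * tabooMatrix (diagonal h * M) k ^ n) k k) := by
  set G : (Fin (n + 2) → α) → ℝ := fun v =>
    if IsFirstReturnPath k v then ∏ t : Fin (n + 1), h (v t.castSucc) else 0 with hG_def
  have hG : ∀ v, 0 ≤ G v := fun v => by
    simp only [G]
    split_ifs
    exacts [prod_nonneg fun t _ => hh _, le_rfl]
  have hind : ∀ ω, {ω | returnTime X k ω = n + 1}.indicator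
      (fun ω => ENNReal.ofReal (∏ t ∈ range (returnTime X k ω), h (X t ω))) ω =
        ENNReal.ofReal (G (trajectory X (n + 1) ω)) := fun ω => by
    by_cases hω : returnTime X k ω = n + 1
    · rw [Set.indicator_of_mem (s := {ω | returnTime X k ω = n + 1}) hω, hω,
        ← Fin.prod_univ_eq_prod_range, hG_def]
      simp only [if_pos (returnTime_eq_succ_iff.mp hω)]
      rfl
    · rw [Set.indicator_of_notMem (s := {ω | returnTime X k ω = n + 1}) hω, hG_def]
      simp only [if_neg (mt returnTime_eq_succ_iff.mpr hω), ENNReal.ofReal_zero]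
  rw [← lintegral_indicator (measurableSet_returnTime_eq_succ hX n), lintegral_congr hind,
    lintegral_ofReal_comp_eq_sum_measureReal (measurable_trajectory hX _) hG,
    ← sum_isFirstReturnPath_prod]
  congr 1
  refine Fintype.sum_congr _ _ fun v => ?_
  rw [measureReal_trajectory_preimage h_chain]
  by_cases hv : IsFirstReturnPath k v <;> by_cases hv0 : v 0 = k <;>
    simp [G, hv, hv0, diagonal_mul, prod_mul_distrib]

theorem lintegral_prod_returnTime_eq_tsum (hX : ∀ n, Measurable (X n))
    (h_chain : ∀ (n : ℕ) (path : ℕ → α), (P {ω | ∀ t ≤ n, X t ω = path t}).toReal =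
      (if path 0 = k then 1 else 0) * ∏ t ∈ range n, M (path t) (path (t + 1)))
    (h_ret : ∀ᵐ ω ∂P, ∃ n, 1 ≤ n ∧ X n ω = k) {h : α → ℝ} (hh : ∀ i, 0 ≤ h i) :
    ∫⁻ ω, ENNReal.ofReal (∏ t ∈ range (returnTime X k ω), h (X t ω)) ∂P =
      ∑' n, ENNReal.ofReal ((diagonal h * M * tabooMatrix (diagonal h * M) k ^ n) k k) := by
  have hcover : ∀ᵐ ω ∂P, ω ∈ ⋃ n, {ω | returnTime X k ω = n + 1} := by
    filter_upwards [h_ret] with ω hω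
    have hpos : 1 ≤ returnTime X k ω := (Nat.sInf_mem hω).1
    exact Set.mem_iUnion.2 ⟨returnTime X k ω - 1, by simp only [Set.mem_ofPred_eq]; omega⟩
  have hdisj : Pairwise (Function.onFun Disjoint fun n => {ω | returnTime X k ω = n + 1}) :=
    fun a b hab => Set.disjoint_left.2 fun ω ha hb => hab (by simp_all)
  rw [← Measure.restrict_eq_self_of_ae_mem hcover,
    lintegral_iUnion (measurableSet_returnTime_eq_succ hX) hdisj]
  exact tsum_congr (setLIntegral_prod_returnTime_eq_succ hX h_chain hh)

end MarkovChain

theorem expectation_return_time_weight_eq_one_general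
    {N : ℕ} (A : Matrix (Fin N) (Fin N) ℝ)
    (hA_nonneg : ∀ i j, 0 ≤ A i j)
    (hA_prim : ∃ m : ℕ, 0 < m ∧ ∀ i j, 0 < (A ^ m) i j)
    (lam : ℝ) (u : Fin N → ℝ)
    (hlam_pos : 0 < lam)
    (hu_pos : ∀ i, 0 < u i)
    (hu_eig : ∀ j, ∑ i, u i * A i j = lam * u j)
    (f : Fin N → ℝ) (hf : ∀ i, f i = ∑ j, A i j)
    (M : Matrix (Fin N) (Fin N) ℝ) (hM : ∀ i j, M i j = A i j / f i)
    (Ω : Type*) [MeasurableSpace Ω] (P : Measure Ω) [IsProbabilityMeasure P]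
    (X : ℕ → Ω → Fin N) (hX_meas : ∀ n, Measurable (X n))
    (k : Fin N)
    (h_chain : ∀ (n : ℕ) (path : ℕ → Fin N),
      (P {ω | ∀ t ≤ n, X t ω = path t}).toReal =
        (if path 0 = k then 1 else 0) *
          ∏ t ∈ Finset.range n, M (path t) (path (t + 1)))
    (τ : Ω → ℕ) (hτ : ∀ ω, τ ω = sInf {n : ℕ | 1 ≤ n ∧ X n ω = k})
    (hτ_fin : ∀ᵐ ω ∂P, ∃ n : ℕ, 1 ≤ n ∧ X n ω = k) :
    ∫ ω, lam⁻¹ ^ (τ ω) * ∏ t ∈ Finset.range (τ ω), f (X t ω) ∂P = 1 := by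
  obtain ⟨m, hm, hAm⟩ := hA_prim
  obtain rfl : τ = returnTime X k := funext hτ
  have hf_pos : ∀ i, 0 < f i := fun i =>
    hf i ▸ sum_apply_pos_of_pow_apply_pos hA_nonneg hm (hAm i i)
  set h : Fin N → ℝ := fun i => lam⁻¹ * f i
  have hh : ∀ i, 0 ≤ h i := fun i => mul_nonneg (inv_nonneg.2 hlam_pos.le) (hf_pos i).le
  have hweight : ∀ ω, lam⁻¹ ^ returnTime X k ω * ∏ t ∈ range (returnTime X k ω), f (X t ω) =
      ∏ t ∈ range (returnTime X k ω), h (X t ω) := fun ω => by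
    simp [h, prod_mul_distrib]
  have hdiag : diagonal h * M = lam⁻¹ • A := by
    ext i j
    rw [diagonal_mul, hM, Matrix.smul_apply, smul_eq_mul, mul_assoc,
      mul_div_cancel₀ _ (hf_pos i).ne']
  have hT : ∀ i j, 0 ≤ (lam⁻¹ • A) i j := fun i j =>
    mul_nonneg (inv_nonneg.2 hlam_pos.le) (hA_nonneg i j)
  have hTm : ∀ j, 0 < ((lam⁻¹ • A) ^ m) k j := fun j => by
    rw [smul_pow, Matrix.smul_apply, smul_eq_mul]
    exact mul_pos (by positivity) (hAm k j)
  have hu : u ᵥ* (lam⁻¹ • A) = u := by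
    ext j
    rw [vecMul_smul, Pi.smul_apply, smul_eq_mul, show (u ᵥ* A) j = lam * u j from hu_eig j,
      inv_mul_cancel_left₀ hlam_pos.ne']
  simp_rw [hweight]
  rw [integral_eq_lintegral_of_nonneg_ae (ae_of_all _ fun ω => prod_nonneg fun t _ => hh _)
      (measurable_prod_range_returnTime hX_meas h).aestronglyMeasurable,
    lintegral_prod_returnTime_eq_tsum hX_meas h_chain hτ_fin hh, hdiag,
    tsum_ofReal_mul_tabooMatrix_pow_apply_self hT hu_pos hu hm hTm, ENNReal.toReal_one]

/-- With the notation of the theorem, the expectation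
`E_k[ lam^{-τ} ∏_{t<τ} f (X t) ]` equals `1`. -/
theorem expectation_return_time_weight_eq_one
    {N : ℕ} (A : Matrix (Fin N) (Fin N) ℝ)
    (hA_nonneg : ∀ i j, 0 ≤ A i j)
    (hA_prim : ∃ m : ℕ, 0 < m ∧ ∀ i j, 0 < (A ^ m) i j)
    (lam : ℝ) (u : Fin N → ℝ)
    (hlam_pos : 0 < lam)
    (hu_pos : ∀ i, 0 < u i)
    (hu_sum : ∑ i, u i = 1)
    (hu_eig : ∀ j, ∑ i, u i * A i j = lam * u j)
    (f : Fin N → ℝ) (hf : ∀ i, f i = ∑ j, A i j)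
    (M : Matrix (Fin N) (Fin N) ℝ) (hM : ∀ i j, M i j = A i j / f i)
    (Ω : Type*) [MeasurableSpace Ω] (P : Measure Ω) [IsProbabilityMeasure P]
    (X : ℕ → Ω → Fin N) (hX_meas : ∀ n, Measurable (X n))
    (k : Fin N)
    (h_chain : ∀ (n : ℕ) (path : ℕ → Fin N),
      (P {ω | ∀ t ≤ n, X t ω = path t}).toReal =
        (if path 0 = k then 1 else 0) *
          ∏ t ∈ Finset.range n, M (path t) (path (t + 1)))
    (τ : Ω → ℕ) (hτ : ∀ ω, τ ω = sInf {n : ℕ | 1 ≤ n ∧ X n ω = k})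
    (hτ_fin : ∀ᵐ ω ∂P, ∃ n : ℕ, 1 ≤ n ∧ X n ω = k) :
    ∫ ω, lam⁻¹ ^ (τ ω) * ∏ t ∈ Finset.range (τ ω), f (X t ω) ∂P = 1 :=
  expectation_return_time_weight_eq_one_general A hA_nonneg hA_prim lam u hlam_pos hu_pos hu_eig f
    hf M hM Ω P X hX_meas k h_chain τ hτ hτ_fin
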